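/- The flow of a flow graph is a Kleene least fixed point: for a flow graph h = (X, E, in), the step function iter : (X → M) → (X → M) defined by iter(cval)(x) = Σ_{y∉X} in(y,x) + Σ_{y∈X} E(y,x)(cval(y)) is monotone and continuous with respect to the pointwise natural order, and h.flow = lfp(iter) = ⨆_{i∈ℕ} iterⁱ(⊥), where ⊥ is the constant-0 function. Moreover, if compatible_⪯(h) holds for a relation ⪯ on M, then iter is also monotone with respect to the pointwise lifting of ⪯. -/

import Mathlib

universe u

/-- A flow monoid: a commutative monoid whose natural order
(`m ≤ n ↔ ∃ o, n = m + o`) is a partial order that forms an ω-cpo, with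
continuous addition. `csup` assigns to every ascending chain its join. -/
class FlowMonoid (M : Type u) extends AddCommMonoid M, PartialOrder M, IsOrderedAddMonoid M,
    CanonicallyOrderedAdd M where
  /-- The join of an ascending chain. -/
  csup : (ℕ → M) → M
  isLUB_csup : ∀ K : ℕ → M, Monotone K → IsLUB (Set.range K) (csup K)
  add_csup : ∀ (n : M) (K : ℕ → M), Monotone K → n + csup K = csup fun i => n + K i

variable {M : Type u} [FlowMonoid M]

/-- Continuity: `f` commutes with joins of ascending chains. -/
def FMCont (f : M → M) : Prop :=
  ∀ K : ℕ → M, Monotone K →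
    IsLUB (Set.range fun i => f (K i)) (f (FlowMonoid.csup K))

/-- A flow graph: a finite set of nodes `X ⊆ ℕ`, continuous edge functions, and
a finitely supported inflow from sources outside `X` into `X`. (The edge
functions of sources outside `X` and the inflow outside its domain are
canonically zero.) -/
structure FlowGraph (M : Type u) [FlowMonoid M] where
  /-- The nodes. -/
  X : Finset ℕ
  /-- The edge functions: `E x y` labels the edge from `x` to `y`. -/
  E : ℕ → ℕ → M → M
  /-- The inflow: `inflow y x` is the flow the graph receives at `x ∈ X` from the
  external node `y ∉ X`. -/
  inflow : ℕ → ℕ → M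
  econt : ∀ x y, x ∈ X → FMCont (E x y)
  edom : ∀ x y, x ∉ X → E x y = fun _ => 0
  inflow_fin : ∀ x, (Function.support fun y => inflow y x).Finite
  inflow_dom : ∀ y x, inflow y x ≠ 0 → y ∉ X ∧ x ∈ X

namespace FlowGraph

/-- One step of the flow fixed-point computation, with inflow `i`. -/
noncomputable def stepWith (h : FlowGraph M) (i : ℕ → ℕ → M) (c : ℕ → M) : ℕ → M :=
  fun x => if x ∈ h.X then (∑ᶠ y, i y x) + ∑ y ∈ h.X, h.E y x (c y) else 0

/-- The flow for a custom inflow `i`, obtained by Kleene iteration: the least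
function satisfying the flow equation. -/
noncomputable def flowWith (h : FlowGraph M) (i : ℕ → ℕ → M) : ℕ → M :=
  fun x => FlowMonoid.csup fun n => (h.stepWith i)^[n] (fun _ => 0) x

/-- The flow of a flow graph. -/
noncomputable def flow (h : FlowGraph M) : ℕ → M := h.flowWith h.inflow

/-- The outflow of a flow graph: `out x y = E x y (flow x)`. -/
noncomputable def out (h : FlowGraph M) (x y : ℕ) : M := h.E x y (h.flow x)

/-- The transfer function: maps an inflow `i` to the resulting outflow at `y`. -/
noncomputable def tf (h : FlowGraph M) (i : ℕ → ℕ → M) (y : ℕ) : M :=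
  ∑ x ∈ h.X, h.E x y (h.flowWith i x)

/-- The ghost multiplication of flow graphs: disjoint union of the node sets and
edges; the inflow of each component is restricted to sources outside the other. -/
def gmul (s t : FlowGraph M) : FlowGraph M where
  X := s.X ∪ t.X
  E := fun x y => if x ∈ s.X then s.E x y else t.E x y
  inflow := fun y x => if y ∈ s.X ∪ t.X then 0 else s.inflow y x + t.inflow y x
  econt := by
    intro x y hx
    by_cases hs : x ∈ s.X
    · rw [if_pos hs]; exact s.econt x y hs
    · rw [if_neg hs]
      rcases Finset.mem_union.mp hx with h | h
      · exact absurd h hs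
      · exact t.econt x y h
  edom := by
    intro x y hx
    rw [if_neg fun h => hx (Finset.mem_union_left _ h)]
    exact t.edom x y fun h => hx (Finset.mem_union_right _ h)
  inflow_fin := by
    intro x
    refine Set.Finite.subset ((s.inflow_fin x).union (t.inflow_fin x)) ?_
    intro y hy
    rw [Function.mem_support] at hy
    by_cases hmem : y ∈ s.X ∪ t.X
    · rw [if_pos hmem] at hy; exact absurd rfl hy
    · rw [if_neg hmem] at hy
      by_cases h1 : s.inflow y x = 0
      · have h2 : t.inflow y x ≠ 0 := fun h2 => hy (by rw [h1, h2, add_zero])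
        exact Set.mem_union_right _ (Function.mem_support.mpr h2)
      · exact Set.mem_union_left _ (Function.mem_support.mpr h1)
  inflow_dom := by
    intro y x hy
    by_cases hmem : y ∈ s.X ∪ t.X
    · rw [if_pos hmem] at hy; exact absurd rfl hy
    · rw [if_neg hmem] at hy
      refine ⟨hmem, ?_⟩
      by_cases h1 : s.inflow y x = 0
      · have h2 : t.inflow y x ≠ 0 := fun h2 => hy (by rw [h1, h2, add_zero])
        exact Finset.mem_union_right _ (t.inflow_dom y x h2).2
      · exact Finset.mem_union_left _ (s.inflow_dom y x h1).2

/-- Definedness of the multiplication `s ⋆ t` of flow graphs: the ghost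
multiplication is defined, the inflow expectation of each graph at the mutual
boundary matches the outflow of the other, and the flows are preserved in the
composition (whose result is then `gmul s t`). -/
def MDef (s t : FlowGraph M) : Prop :=
  Disjoint s.X t.X ∧
  (∀ x ∈ s.X, ∀ y ∈ t.X, s.out x y = t.inflow x y ∧ t.out y x = s.inflow y x) ∧
  (∀ x ∈ s.X, (gmul s t).flow x = s.flow x) ∧
  (∀ y ∈ t.X, (gmul s t).flow y = t.flow y)

end FlowGraph

/-- The pointwise join of an ascending chain of functions `X → M`. -/
noncomputable def chainJoin {X : Finset ℕ} (Ch : ℕ → ({x : ℕ // x ∈ X} → M)) :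
    {x : ℕ // x ∈ X} → M :=
  fun x => FlowMonoid.csup fun i => Ch i x

/-- `≤`-continuity of a function on `X → M`: it commutes with joins of
pointwise-ascending chains. -/
def ContOn (X : Finset ℕ)
    (f : ({x : ℕ // x ∈ X} → M) → ({x : ℕ // x ∈ X} → M)) : Prop :=
  ∀ Ch : ℕ → ({x : ℕ // x ∈ X} → M), (∀ i x, Ch i x ≤ Ch (i + 1) x) →
    ∀ x, IsLUB (Set.range fun i => f (Ch i) x) (f (chainJoin Ch) x)

/-- Pointwise `≤`-monotonicity of a function on `X → M`. -/
def MonoOn (X : Finset ℕ)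
    (f : ({x : ℕ // x ∈ X} → M) → ({x : ℕ // x ∈ X} → M)) : Prop :=
  ∀ c d : {x : ℕ // x ∈ X} → M, (∀ x, c x ≤ d x) → ∀ x, f c x ≤ f d x

/-- Pointwise `⪯`-monotonicity of a function on `X → M`. -/
def RMonoOn (r : M → M → Prop) (X : Finset ℕ)
    (f : ({x : ℕ // x ∈ X} → M) → ({x : ℕ // x ∈ X} → M)) : Prop :=
  ∀ c d : {x : ℕ // x ∈ X} → M, (∀ x, r (c x) (d x)) → ∀ x, r (f c x) (f d x)

/-- The join of the Kleene chain `⨆ᵢ fⁱ(⊥)` of a function on `X → M`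
(`⊥` is the constant-0 function); for continuous `f` this is `lfp(f)`. -/
noncomputable def kleeneOn {X : Finset ℕ}
    (f : ({x : ℕ // x ∈ X} → M) → ({x : ℕ // x ∈ X} → M)) : {x : ℕ // x ∈ X} → M :=
  fun x => FlowMonoid.csup fun i => (f^[i] fun _ => 0) x

/-- Condition (C4): for all `≤`-continuous, pointwise-`⪯`-monotone functions
`f, g` on `X → M` with `fⁱ(⊥)` pointwise-`⪯` `gⁱ(⊥)` for all `i` and
`lfp(f)` pointwise-`⪯` `g(lfp(f))`, one has `⨆ᵢ fⁱ(⊥)` pointwise-`⪯` `⨆ᵢ gⁱ(⊥)`. -/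
def C4 (r : M → M → Prop) (X : Finset ℕ) : Prop :=
  ∀ f g : ({x : ℕ // x ∈ X} → M) → ({x : ℕ // x ∈ X} → M),
    ContOn X f → ContOn X g → RMonoOn r X f → RMonoOn r X g →
    (∀ (i : ℕ) (x : {x : ℕ // x ∈ X}), r ((f^[i] fun _ => 0) x) ((g^[i] fun _ => 0) x)) →
    (∀ x, r (kleeneOn f x) (g (kleeneOn f) x)) →
    ∀ x, r (kleeneOn f x) (kleeneOn g x)

/-- `compatible_⪯(h)`: conditions (C1)–(C4) of the relation `⪯` with respect to
the flow graph `h`. -/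
def Compatible (r : M → M → Prop) (h : FlowGraph M) : Prop :=
  -- (C1) transitive and `0 ⪯ 0`
  (∀ m n o : M, r m n → r n o → r m o) ∧ r 0 0 ∧
  -- (C2) compatible with addition
  (∀ m n o : M, r m n → r (m + o) (n + o)) ∧
  -- (C3) the edge functions of `h` are `⪯`-monotone
  (∀ x y : ℕ, x ∈ h.X → ∀ m n : M, r m n → r (h.E x y m) (h.E x y n)) ∧
  -- (C4)
  C4 r h.X

section Helpers

open FlowMonoid

lemma my_csup_eq_of_isLUB {K : ℕ → M} (hK : Monotone K) {a : M}
    (ha : IsLUB (Set.range K) a) : csup K = a :=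
  (isLUB_csup K hK).unique ha

lemma my_le_csup {K : ℕ → M} (hK : Monotone K) (i : ℕ) : K i ≤ csup K :=
  (isLUB_csup K hK).1 ⟨i, rfl⟩

lemma my_csup_le {K : ℕ → M} (hK : Monotone K) {a : M} (ha : ∀ i, K i ≤ a) :
    csup K ≤ a :=
  (isLUB_csup K hK).2 (by rintro _ ⟨i, rfl⟩; exact ha i)

lemma my_csup_const (m : M) : csup (fun _ => m) = m :=
  my_csup_eq_of_isLUB monotone_const
    ⟨by rintro _ ⟨i, rfl⟩; exact le_rfl, fun b hb => hb ⟨0, rfl⟩⟩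

lemma my_fmcont_mono {f : M → M} (hf : FMCont f) : Monotone f := by
  intro m n hmn
  set K : ℕ → M := fun i => if i = 0 then m else n with hKdef
  have hK : Monotone K := by
    apply monotone_nat_of_le_succ
    intro i
    cases i with
    | zero => simpa [K] using hmn
    | succ j => simp [K]
  have hcs : csup K = n := by
    apply my_csup_eq_of_isLUB hK
    constructor
    · rintro _ ⟨i, rfl⟩
      cases i with
      | zero => simpa [K] using hmn
      | succ j => simp [K]
    · intro b hb
      have := hb ⟨1, rfl⟩
      simpa [K] using this
  have h1 := hf K hK
  rw [hcs] at h1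
  have := h1.1 ⟨0, rfl⟩
  simpa [K] using this

lemma my_fmcont_csup {f : M → M} (hf : FMCont f) {K : ℕ → M} (hK : Monotone K) :
    f (csup K) = csup fun i => f (K i) :=
  (my_csup_eq_of_isLUB (fun i j hij => my_fmcont_mono hf (hK hij)) (hf K hK)).symm

lemma my_csup_le_csup {K L : ℕ → M} (hK : Monotone K) (hL : Monotone L)
    (hKL : ∀ i, K i ≤ L i) : csup K ≤ csup L :=
  my_csup_le hK fun i => le_trans (hKL i) (my_le_csup hL i)

lemma my_csup_add {K L : ℕ → M} (hK : Monotone K) (hL : Monotone L) :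
    csup K + csup L = csup fun i => K i + L i := by
  have hdiag : Monotone fun i => K i + L i :=
    fun i j hij => add_le_add (hK hij) (hL hij)
  have hinner : ∀ i, Monotone fun j => K j + L i :=
    fun i a b hab => add_le_add (hK hab) le_rfl
  have step1 : csup K + csup L = csup fun i => csup K + L i :=
    add_csup (csup K) L hL
  have step2 : ∀ i, csup K + L i = csup fun j => K j + L i := by
    intro i
    rw [add_comm (csup K) (L i), add_csup (L i) K hK]
    exact congrArg csup (funext fun j => add_comm (L i) (K j))
  rw [step1, show (fun i => csup K + L i) = fun i => csup fun j => K j + L i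
    from funext step2]
  have houter : Monotone fun i => csup fun j => K j + L i := by
    intro a b hab
    exact my_csup_le_csup (hinner a) (hinner b) fun j => add_le_add le_rfl (hL hab)
  apply le_antisymm
  · apply my_csup_le houter
    intro i
    apply my_csup_le (hinner i)
    intro j
    calc K j + L i ≤ K (max i j) + L (max i j) :=
          add_le_add (hK (le_max_right i j)) (hL (le_max_left i j))
      _ ≤ _ := my_le_csup hdiag (max i j)
  · apply my_csup_le hdiag
    intro i
    calc K i + L i ≤ csup fun j => K j + L i := my_le_csup (hinner i) i
      _ ≤ _ := my_le_csup houter i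

lemma my_sum_csup {ι : Type*} (s : Finset ι) (K : ι → ℕ → M)
    (hK : ∀ a, Monotone (K a)) :
    ∑ a ∈ s, csup (K a) = csup fun i => ∑ a ∈ s, K a i := by
  classical
  induction s using Finset.induction_on with
  | empty => simp [my_csup_const (0 : M)]
  | insert a s hnotmem ih =>
    rw [Finset.sum_insert hnotmem, ih, my_csup_add (hK a)
      (fun i j hij => Finset.sum_le_sum fun b _ => hK b hij)]
    exact congrArg csup (funext fun i => by rw [Finset.sum_insert hnotmem])

lemma my_csup_succ {K : ℕ → M} (hK : Monotone K) :
    (csup fun i => K (i + 1)) = csup K := by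
  apply le_antisymm
  · exact my_csup_le (fun i j hij => hK (by omega)) fun i => my_le_csup hK (i + 1)
  · exact my_csup_le hK fun i =>
      le_trans (hK (Nat.le_succ i)) (my_le_csup (fun a b hab => hK (by omega)) i)

lemma my_rsum {r : M → M → Prop}
    (htrans : ∀ m n o : M, r m n → r n o → r m o) (h00 : r 0 0)
    (hadd : ∀ m n o : M, r m n → r (m + o) (n + o))
    {ι : Type*} (s : Finset ι) (f g : ι → M) (hfg : ∀ a ∈ s, r (f a) (g a)) :
    r (∑ a ∈ s, f a) (∑ a ∈ s, g a) := by
  classical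
  have hadd2 : ∀ m n m' n' : M, r m n → r m' n' → r (m + m') (n + n') := by
    intro m n m' n' h1 h2
    refine htrans _ (n + m') _ (hadd _ _ _ h1) ?_
    rw [add_comm n m', add_comm n n']
    exact hadd _ _ _ h2
  induction s using Finset.induction_on with
  | empty => simpa using h00
  | insert a s hnotmem ih =>
    rw [Finset.sum_insert hnotmem, Finset.sum_insert hnotmem]
    exact hadd2 _ _ _ _ (hfg a (Finset.mem_insert_self a s))
      (ih fun b hb => hfg b (Finset.mem_insert_of_mem hb))

end Helpers

open FlowGraph in
/-- The flow of a flow graph is a Kleene least fixed point. The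
step function `iter` of the flow equation is monotone and continuous w.r.t. the
pointwise natural order, its Kleene join `⨆ᵢ iterⁱ(⊥)` is its least fixed point,
and it equals the flow; moreover, under `compatible_⪯(h)`, `iter` is monotone
w.r.t. the pointwise lifting of `⪯`. -/
theorem flow_is_kleene_least_fixed_point (h : FlowGraph M)
    (iter : ({x : ℕ // x ∈ h.X} → M) → ({x : ℕ // x ∈ h.X} → M))
    (hiter : ∀ (c : {x : ℕ // x ∈ h.X} → M) (x : {x : ℕ // x ∈ h.X}),
      iter c x = (∑ᶠ y, h.inflow y x.1) + ∑ y ∈ h.X.attach, h.E y.1 x.1 (c y)) :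
    MonoOn h.X iter ∧ ContOn h.X iter ∧
    -- `⨆ᵢ iterⁱ(⊥)` is a fixed point of `iter`, …
    (∀ x, iter (kleeneOn iter) x = kleeneOn iter x) ∧
    -- … and it is below every fixed point, i.e. it is `lfp(iter)`, …
    (∀ c : {x : ℕ // x ∈ h.X} → M, (∀ x, iter c x = c x) → ∀ x, kleeneOn iter x ≤ c x) ∧
    -- … and the flow `h.flow` (the least solution of the flow equation) equals it
    (∀ x : {x : ℕ // x ∈ h.X}, h.flow x.1 = kleeneOn iter x) ∧
    -- under `compatible_⪯(h)`, `iter` is pointwise `⪯`-monotone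
    (∀ r : M → M → Prop, Compatible r h → RMonoOn r h.X iter) := by
  classical
  have hmono : MonoOn h.X iter := by
    intro c d hcd x
    rw [hiter, hiter]
    exact add_le_add_right (Finset.sum_le_sum fun y _ =>
      my_fmcont_mono (h.econt y.1 x.1 y.2) (hcd y)) _
  have hconteq : ∀ Ch : ℕ → ({x : ℕ // x ∈ h.X} → M),
      (∀ i x, Ch i x ≤ Ch (i + 1) x) →
      ∀ x, iter (chainJoin Ch) x = FlowMonoid.csup fun i => iter (Ch i) x := by
    intro Ch hCh x
    have hm : ∀ y : {x : ℕ // x ∈ h.X}, Monotone fun i => Ch i y :=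
      fun y => monotone_nat_of_le_succ fun i => hCh i y
    rw [hiter]
    have e1 : ∀ y ∈ h.X.attach, h.E y.1 x.1 (chainJoin Ch y)
        = FlowMonoid.csup fun i => h.E y.1 x.1 (Ch i y) := fun y _ =>
      my_fmcont_csup (h.econt y.1 x.1 y.2) (hm y)
    rw [Finset.sum_congr rfl e1,
      my_sum_csup h.X.attach _ (fun y i j hij =>
        my_fmcont_mono (h.econt y.1 x.1 y.2) (hm y hij)),
      FlowMonoid.add_csup _ _ (fun i j hij => Finset.sum_le_sum fun y _ =>
        my_fmcont_mono (h.econt y.1 x.1 y.2) (hm y hij))]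
    exact congrArg _ (funext fun i => (hiter (Ch i) x).symm)
  have hcont : ContOn h.X iter := by
    intro Ch hCh x
    rw [hconteq Ch hCh x]
    exact FlowMonoid.isLUB_csup _
      (monotone_nat_of_le_succ fun i => hmono _ _ (fun y => hCh i y) x)
  have hC : ∀ (i : ℕ) (x : {x : ℕ // x ∈ h.X}),
      (iter^[i] fun _ => 0) x ≤ (iter^[i + 1] fun _ => 0) x := by
    intro i
    induction i with
    | zero => intro x; exact zero_le
    | succ j ih =>
      intro x
      rw [Function.iterate_succ_apply', Function.iterate_succ_apply']
      exact hmono _ _ ih x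
  have hCmono : ∀ x : {x : ℕ // x ∈ h.X},
      Monotone fun i => (iter^[i] fun _ => 0) x :=
    fun x => monotone_nat_of_le_succ fun i => hC i x
  have hfix : ∀ x, iter (kleeneOn iter) x = kleeneOn iter x := by
    intro x
    have e : kleeneOn iter = chainJoin fun i => iter^[i] fun _ => 0 := rfl
    rw [e, hconteq _ hC x]
    have e2 : (fun i => iter ((iter^[i]) fun _ => 0) x)
        = fun i => (iter^[i + 1] fun _ => 0) x :=
      funext fun i => by rw [Function.iterate_succ_apply']
    rw [e2, my_csup_succ (hCmono x)]
    rfl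
  have hleast : ∀ c : {x : ℕ // x ∈ h.X} → M, (∀ x, iter c x = c x) →
      ∀ x, kleeneOn iter x ≤ c x := by
    intro c hc x
    have key : ∀ (i : ℕ) (x : {x : ℕ // x ∈ h.X}),
        (iter^[i] fun _ => 0) x ≤ c x := by
      intro i
      induction i with
      | zero => intro x; exact zero_le
      | succ j ih =>
        intro x
        rw [Function.iterate_succ_apply']
        exact le_trans (hmono _ _ ih x) (le_of_eq (hc x))
    exact my_csup_le (hCmono x) fun i => key i x
  have hflow : ∀ x : {x : ℕ // x ∈ h.X}, h.flow x.1 = kleeneOn iter x := by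
    have key : ∀ (n : ℕ) (x : ℕ) (hx : x ∈ h.X),
        ((h.stepWith h.inflow)^[n] fun _ => 0) x
          = (iter^[n] fun _ => 0) ⟨x, hx⟩ := by
      intro n
      induction n with
      | zero => intro x hx; rfl
      | succ j ih =>
        intro x hx
        rw [Function.iterate_succ_apply', Function.iterate_succ_apply', hiter]
        show (if x ∈ h.X then (∑ᶠ y, h.inflow y x)
            + ∑ y ∈ h.X, h.E y x (((h.stepWith h.inflow)^[j] fun _ => 0) y)
          else 0) = _
        rw [if_pos hx]
        congr 1
        rw [← Finset.sum_attach h.X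
          fun y => h.E y x (((h.stepWith h.inflow)^[j] fun _ => 0) y)]
        exact Finset.sum_congr rfl fun y _ => congrArg (h.E y.1 x) (ih y.1 y.2)
    intro x
    show FlowMonoid.csup _ = FlowMonoid.csup _
    exact congrArg FlowMonoid.csup (funext fun n => key n x.1 x.2)
  have hrmono : ∀ r : M → M → Prop, Compatible r h → RMonoOn r h.X iter := by
    intro r hcompat c d hcd x
    obtain ⟨htrans, h00, hadd, hE, -⟩ := hcompat
    rw [hiter, hiter]
    have hsum := my_rsum htrans h00 hadd h.X.attach _ _
      (fun y _ => hE y.1 x.1 y.2 _ _ (hcd y))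
    have h2 := hadd _ _ (∑ᶠ y, h.inflow y x.1) hsum
    rwa [add_comm _ (∑ᶠ y, h.inflow y x.1),
      add_comm (∑ y ∈ h.X.attach, h.E y.1 x.1 (d y))] at h2
  exact ⟨hmono, hcont, hfix, hleast, hflow, hrmono⟩
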